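/- arXiv:1004.2452 — 2 statements merged into one kernel-verified Lean document; each statement's English description precedes it below -/
import Mathlib

section
/- For any matrices A_1, A_2, A_3 ∈ M(ℂ^d) and any n ≥ 3, the following operator identity holds on (ℂ^d)^{⊗n}: (1/n^{3/2}) Σ_{(β_1,β_2,β_3)} A_1^{(β_1)} A_2^{(β_2)} A_3^{(β_3)} = S(F_n(A_1), F_n(A_2), F_n(A_3)) − P_n(A_1∘A_2) ∘ F_n(A_3) − P_n(A_1∘A_3) ∘ F_n(A_2) − P_n(A_2∘A_3) ∘ F_n(A_1) + (2/√n) P_n(S(A_1,A_2,A_3)), where the sum on the left runs over all ordered triples of pairwise distinct indices from {1,...,n}, and S(X_1,X_2,X_3) := (1/6) Σ_{τ ∈ S(3)} X_{τ(1)} X_{τ(2)} X_{τ(3)}. -/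
open scoped BigOperators
open Matrix

/-- The tensor product of a family of `d × d` matrices, as a matrix indexed by
multi-indices `Fin n → Fin d`. -/
noncomputable def tensorFam {d n : ℕ} (M : Fin n → Matrix (Fin d) (Fin d) ℂ) :
    Matrix (Fin n → Fin d) (Fin n → Fin d) ℂ :=
  Matrix.of fun x y => ∏ i, M i (x i) (y i)

/-- `H^{(i)} = 1 ⊗ ... ⊗ H ⊗ ... ⊗ 1`, with `H` in the `i`-th tensor slot. -/
noncomputable def amp {d n : ℕ} (i : Fin n) (H : Matrix (Fin d) (Fin d) ℂ) :
    Matrix (Fin n → Fin d) (Fin n → Fin d) ℂ :=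
  tensorFam fun j => if j = i then H else 1

/-- The fluctuation observable `F_n(A) := n^{-1/2} Σ_i A^{(i)}`. -/
noncomputable def Fluct {d : ℕ} (n : ℕ) (A : Matrix (Fin d) (Fin d) ℂ) :
    Matrix (Fin n → Fin d) (Fin n → Fin d) ℂ :=
  (Real.sqrt n)⁻¹ • ∑ i : Fin n, amp i A

/-- The empirical average `P_n(B) := n⁻¹ Σ_i B^{(i)}`. -/
noncomputable def Emp {d : ℕ} (n : ℕ) (B : Matrix (Fin d) (Fin d) ℂ) :
    Matrix (Fin n → Fin d) (Fin n → Fin d) ℂ :=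
  ((n : ℝ))⁻¹ • ∑ i : Fin n, amp i B

/-- The Jordan product `A ∘ B := (AB + BA)/2`. -/
noncomputable def jord {N : Type*} [Fintype N] [DecidableEq N]
    (X Y : Matrix N N ℂ) : Matrix N N ℂ :=
  (2 : ℝ)⁻¹ • (X * Y + Y * X)

/-- The symmetrized product of three matrices,
`S(X₁,X₂,X₃) = (1/3!) Σ_{τ ∈ S(3)} X_{τ(1)} X_{τ(2)} X_{τ(3)}`. -/
noncomputable def symProd3 {N : Type*} [Fintype N] [DecidableEq N]
    (X₁ X₂ X₃ : Matrix N N ℂ) : Matrix N N ℂ :=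
  (6 : ℝ)⁻¹ • (X₁ * X₂ * X₃ + X₁ * X₃ * X₂ + X₂ * X₁ * X₃ + X₂ * X₃ * X₁ +
    X₃ * X₁ * X₂ + X₃ * X₂ * X₁)

section AuxAmp

lemma tensorFam_congr {d n : ℕ} {M N : Fin n → Matrix (Fin d) (Fin d) ℂ}
    (h : ∀ i, M i = N i) : tensorFam M = tensorFam N := by
  rw [funext h]

lemma tensorFam_mul {d n : ℕ} (M N : Fin n → Matrix (Fin d) (Fin d) ℂ) :
    tensorFam M * tensorFam N = tensorFam (fun i => M i * N i) := by
  ext x y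
  simp only [tensorFam, Matrix.mul_apply, Matrix.of_apply]
  rw [show (∑ z : Fin n → Fin d, (∏ i, M i (x i) (z i)) * ∏ i, N i (z i) (y i))
      = ∑ z : Fin n → Fin d, ∏ i, (M i (x i) (z i) * N i (z i) (y i)) by
    refine Finset.sum_congr rfl fun z _ => ?_
    rw [← Finset.prod_mul_distrib]]
  rw [Finset.prod_univ_sum, Fintype.piFinset_univ]

lemma amp_mul_same {d n : ℕ} (i : Fin n) (A B : Matrix (Fin d) (Fin d) ℂ) :
    amp i A * amp i B = amp i (A * B) := by
  unfold amp
  rw [tensorFam_mul]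
  refine tensorFam_congr fun k => ?_
  by_cases h : k = i <;> simp [h]

lemma amp_comm {d n : ℕ} {i j : Fin n} (h : i ≠ j) (A B : Matrix (Fin d) (Fin d) ℂ) :
    amp i A * amp j B = amp j B * amp i A := by
  unfold amp
  rw [tensorFam_mul, tensorFam_mul]
  refine tensorFam_congr fun k => ?_
  by_cases hi : k = i <;> by_cases hj : k = j <;>
    simp [hi, hj, h, h.symm]

lemma amp_apply' {d n : ℕ} (i : Fin n) (H : Matrix (Fin d) (Fin d) ℂ)
    (x y : Fin n → Fin d) :
    amp i H x y = H (x i) (y i) *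
      ∏ j ∈ Finset.univ.erase i, (1 : Matrix (Fin d) (Fin d) ℂ) (x j) (y j) := by
  unfold amp tensorFam
  rw [Matrix.of_apply, ← Finset.mul_prod_erase Finset.univ _ (Finset.mem_univ i)]
  simp only [if_pos rfl]
  congr 1
  refine Finset.prod_congr rfl fun j hj => ?_
  rw [if_neg (Finset.ne_of_mem_erase hj)]

lemma amp_add {d n : ℕ} (i : Fin n) (A B : Matrix (Fin d) (Fin d) ℂ) :
    amp i (A + B) = amp i A + amp i B := by
  ext x y
  simp [amp_apply', add_mul]

lemma amp_smul {d n : ℕ} (i : Fin n) (c : ℝ) (A : Matrix (Fin d) (Fin d) ℂ) :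
    amp i (c • A) = c • amp i A := by
  ext x y
  simp [amp_apply', mul_assoc]

end AuxAmp

section AuxRing

lemma swap_pair {R : Type*} [AddCommMonoid R] {ι : Type*} [DecidableEq ι]
    (s : Finset ι) (g : ι → ι → R) :
    ∑ j ∈ s, ∑ k ∈ s.erase j, g j k = ∑ j ∈ s, ∑ k ∈ s.erase j, g k j := by
  have h : ∀ g' : ι → ι → R, ∑ j ∈ s, ∑ k ∈ s.erase j, g' j k
      = ∑ j ∈ s, ∑ k ∈ s, if k ≠ j then g' j k else 0 := by
    intro g'
    refine Finset.sum_congr rfl fun j _ => ?_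
    rw [← Finset.filter_ne', Finset.sum_filter]
  rw [h, h, Finset.sum_comm]
  refine Finset.sum_congr rfl fun j _ => Finset.sum_congr rfl fun k _ => ?_
  by_cases hkj : k = j
  · simp [hkj]
  · simp [hkj, Ne.symm hkj]

lemma tripleSum {R : Type*} [Ring R] {n : ℕ} (X Y Z : Fin n → R)
    (hcomm : ∀ i j : Fin n, i ≠ j → Y j * Z i = Z i * Y j) :
    (∑ i : Fin n, ∑ j ∈ Finset.univ.erase i, ∑ k ∈ (Finset.univ.erase i).erase j,
        X i * Y j * Z k)
      = (∑ i, X i) * (∑ i, Y i) * (∑ i, Z i)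
        - (∑ i, X i * Y i) * (∑ i, Z i)
        - (∑ i, X i * Z i) * (∑ i, Y i)
        - (∑ i, X i) * (∑ i, Y i * Z i)
        + (∑ i, X i * Y i * Z i) + (∑ i, X i * Z i * Y i) := by
  have step1 : ∀ i : Fin n, ∀ j ∈ Finset.univ.erase i,
      (∑ k ∈ (Finset.univ.erase i).erase j, X i * Y j * Z k)
        = X i * Y j * (∑ k, Z k) - X i * Y j * Z i - X i * Y j * Z j := by
    intro i j hj
    rw [← Finset.mul_sum, Finset.sum_erase_eq_sub hj,
      Finset.sum_erase_eq_sub (Finset.mem_univ i), mul_sub, mul_sub]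
  rw [Finset.sum_congr rfl fun i _ => Finset.sum_congr rfl (step1 i)]
  simp only [Finset.sum_sub_distrib]
  have h1 : (∑ i : Fin n, ∑ j ∈ Finset.univ.erase i, X i * Y j * (∑ k, Z k))
      = (∑ i, X i) * (∑ i, Y i) * (∑ k, Z k) - (∑ i, X i * Y i) * (∑ k, Z k) := by
    have e : ∀ i : Fin n, (∑ j ∈ Finset.univ.erase i, X i * Y j * (∑ k, Z k))
        = X i * (∑ i, Y i) * (∑ k, Z k) - X i * Y i * (∑ k, Z k) := by
      intro i
      rw [← Finset.sum_mul, ← Finset.mul_sum,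
        Finset.sum_erase_eq_sub (Finset.mem_univ i), mul_sub, sub_mul]
    rw [Finset.sum_congr rfl fun i _ => e i, Finset.sum_sub_distrib,
      ← Finset.sum_mul, ← Finset.sum_mul, ← Finset.sum_mul]
  have h2 : (∑ i : Fin n, ∑ j ∈ Finset.univ.erase i, X i * Y j * Z i)
      = (∑ i, X i * Z i) * (∑ i, Y i) - ∑ i, X i * Z i * Y i := by
    have e : ∀ i : Fin n, (∑ j ∈ Finset.univ.erase i, X i * Y j * Z i)
        = X i * Z i * (∑ i, Y i) - X i * Z i * Y i := by
      intro i
      have e' : ∀ j ∈ Finset.univ.erase i, X i * Y j * Z i = X i * Z i * Y j := by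
        intro j hj
        rw [mul_assoc, hcomm i j (Finset.ne_of_mem_erase hj).symm, ← mul_assoc]
      rw [Finset.sum_congr rfl e', ← Finset.mul_sum,
        Finset.sum_erase_eq_sub (Finset.mem_univ i), mul_sub]
    rw [Finset.sum_congr rfl fun i _ => e i, Finset.sum_sub_distrib, ← Finset.sum_mul]
  have h3 : (∑ i : Fin n, ∑ j ∈ Finset.univ.erase i, X i * Y j * Z j)
      = (∑ i, X i) * (∑ i, Y i * Z i) - ∑ i, X i * Y i * Z i := by
    have e : ∀ i : Fin n, (∑ j ∈ Finset.univ.erase i, X i * Y j * Z j)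
        = X i * (∑ i, Y i * Z i) - X i * Y i * Z i := by
      intro i
      have e' : ∀ j ∈ Finset.univ.erase i, X i * Y j * Z j = X i * (Y j * Z j) :=
        fun j _ => by rw [mul_assoc]
      rw [Finset.sum_congr rfl e', ← Finset.mul_sum,
        Finset.sum_erase_eq_sub (Finset.mem_univ i), mul_sub, ← mul_assoc]
    rw [Finset.sum_congr rfl fun i _ => e i, Finset.sum_sub_distrib, ← Finset.sum_mul]
  rw [h1, h2, h3]
  abel

lemma sum_mul_commutator {R : Type*} [Ring R] {n : ℕ} (p q : Fin n → R)
    (h : ∀ i j : Fin n, i ≠ j → p i * q j = q j * p i) :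
    (∑ i, p i) * (∑ i, q i)
      = (∑ i, q i) * (∑ i, p i) + (∑ i, p i * q i) - ∑ i, q i * p i := by
  have expand : ∀ (u v : Fin n → R), (∑ i, u i) * (∑ i, v i)
      = (∑ i, u i * v i) + ∑ i, ∑ j ∈ Finset.univ.erase i, u i * v j := by
    intro u v
    rw [Finset.sum_mul, ← Finset.sum_add_distrib]
    refine Finset.sum_congr rfl fun i _ => ?_
    rw [Finset.mul_sum, ← Finset.sum_erase_add Finset.univ _ (Finset.mem_univ i)]
    abel
  rw [expand p q, expand q p]
  rw [swap_pair Finset.univ fun i j => q i * p j]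
  have e : ∀ i : Fin n, ∀ j ∈ Finset.univ.erase i, q j * p i = p i * q j :=
    fun i j hj => (h i j (Finset.ne_of_mem_erase hj).symm).symm
  rw [Finset.sum_congr rfl fun i _ => Finset.sum_congr rfl (e i)]
  abel

lemma nested_swap₁₂ {R : Type*} [Ring R] {n : ℕ} (X Y Z : Fin n → R)
    (h : ∀ i j : Fin n, i ≠ j → X i * Y j = Y j * X i) :
    (∑ i : Fin n, ∑ j ∈ Finset.univ.erase i, ∑ k ∈ (Finset.univ.erase i).erase j,
        X i * Y j * Z k)
      = (∑ i : Fin n, ∑ j ∈ Finset.univ.erase i, ∑ k ∈ (Finset.univ.erase i).erase j,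
        Y i * X j * Z k) := by
  rw [swap_pair Finset.univ
    (fun i j => ∑ k ∈ (Finset.univ.erase i).erase j, X i * Y j * Z k)]
  refine Finset.sum_congr rfl fun i _ => Finset.sum_congr rfl fun j hj => ?_
  have hji : j ≠ i := Finset.ne_of_mem_erase hj
  rw [Finset.erase_right_comm]
  exact Finset.sum_congr rfl fun k _ => by rw [h j i hji]

lemma nested_swap₂₃ {R : Type*} [Ring R] {n : ℕ} (X Y Z : Fin n → R)
    (h : ∀ i j : Fin n, i ≠ j → Y i * Z j = Z j * Y i) :
    (∑ i : Fin n, ∑ j ∈ Finset.univ.erase i, ∑ k ∈ (Finset.univ.erase i).erase j,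
        X i * Y j * Z k)
      = (∑ i : Fin n, ∑ j ∈ Finset.univ.erase i, ∑ k ∈ (Finset.univ.erase i).erase j,
        X i * Z j * Y k) := by
  refine Finset.sum_congr rfl fun i _ => ?_
  rw [swap_pair (Finset.univ.erase i) (fun j k => X i * Y j * Z k)]
  refine Finset.sum_congr rfl fun j _ => Finset.sum_congr rfl fun k hk => ?_
  have hkj : k ≠ j := Finset.ne_of_mem_erase hk
  rw [mul_assoc, h k j hkj, ← mul_assoc]

end AuxRing

set_option maxHeartbeats 1000000 in
/-- **Order-three sums over distinct indices in terms of fluctuations and empirical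
averages.** -/
theorem stmt12 {d : ℕ} (A₁ A₂ A₃ : Matrix (Fin d) (Fin d) ℂ) (n : ℕ) (hn : 3 ≤ n) :
    ((n : ℝ) * Real.sqrt n)⁻¹ •
        (∑ i : Fin n, ∑ j ∈ Finset.univ.erase i, ∑ k ∈ (Finset.univ.erase i).erase j,
          amp i A₁ * amp j A₂ * amp k A₃) =
      symProd3 (Fluct n A₁) (Fluct n A₂) (Fluct n A₃) -
        jord (Emp n (jord A₁ A₂)) (Fluct n A₃) -
        jord (Emp n (jord A₁ A₃)) (Fluct n A₂) -
        jord (Emp n (jord A₂ A₃)) (Fluct n A₁) +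
        (2 * (Real.sqrt n)⁻¹) • Emp n (symProd3 A₁ A₂ A₃) := by
  have hnpos : 0 < n := lt_of_lt_of_le (by norm_num) hn
  have hn0 : (0:ℝ) < (n:ℝ) := by exact_mod_cast hnpos
  set r : ℝ := Real.sqrt (n:ℝ) with hrdef
  have hr0 : 0 < r := Real.sqrt_pos.mpr hn0
  have hrr : r * r = (n:ℝ) := Real.mul_self_sqrt hn0.le
  -- the six distinct-sum expansions
  have E1 := tripleSum (fun i : Fin n => amp i A₁) (fun i => amp i A₂) (fun i => amp i A₃)
    (fun i j hij => amp_comm hij.symm A₂ A₃)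
  simp only [amp_mul_same] at E1
  have N12 := nested_swap₁₂ (fun i : Fin n => amp i A₁) (fun i => amp i A₂)
    (fun i => amp i A₃) (fun i j hij => amp_comm hij A₁ A₂)
  have E2 := N12.trans (tripleSum (fun i : Fin n => amp i A₂) (fun i => amp i A₁)
    (fun i => amp i A₃) (fun i j hij => amp_comm hij.symm A₁ A₃))
  simp only [amp_mul_same] at E2
  have N13 := nested_swap₂₃ (fun i : Fin n => amp i A₁) (fun i => amp i A₂)
    (fun i => amp i A₃) (fun i j hij => amp_comm hij A₂ A₃)
  have E3 := N13.trans (tripleSum (fun i : Fin n => amp i A₁) (fun i => amp i A₃)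
    (fun i => amp i A₂) (fun i j hij => amp_comm hij.symm A₃ A₂))
  simp only [amp_mul_same] at E3
  have N312 := N13.trans (nested_swap₁₂ (fun i : Fin n => amp i A₁) (fun i => amp i A₃)
    (fun i => amp i A₂) (fun i j hij => amp_comm hij A₁ A₃))
  have E4 := N312.trans (tripleSum (fun i : Fin n => amp i A₃) (fun i => amp i A₁)
    (fun i => amp i A₂) (fun i j hij => amp_comm hij.symm A₁ A₂))
  simp only [amp_mul_same] at E4
  have N231 := N12.trans (nested_swap₂₃ (fun i : Fin n => amp i A₂) (fun i => amp i A₁)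
    (fun i => amp i A₃) (fun i j hij => amp_comm hij A₁ A₃))
  have E5 := N231.trans (tripleSum (fun i : Fin n => amp i A₂) (fun i => amp i A₃)
    (fun i => amp i A₁) (fun i j hij => amp_comm hij.symm A₃ A₁))
  simp only [amp_mul_same] at E5
  have N321 := N231.trans (nested_swap₁₂ (fun i : Fin n => amp i A₂) (fun i => amp i A₃)
    (fun i => amp i A₁) (fun i j hij => amp_comm hij A₂ A₃))
  have E6 := N321.trans (tripleSum (fun i : Fin n => amp i A₃) (fun i => amp i A₂)
    (fun i => amp i A₁) (fun i j hij => amp_comm hij.symm A₂ A₁))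
  simp only [amp_mul_same] at E6
  -- the six commutator identities
  have C1 := sum_mul_commutator (fun i : Fin n => amp i (A₁ * A₂)) (fun i => amp i A₃)
    (fun i j hij => amp_comm hij (A₁ * A₂) A₃)
  simp only [amp_mul_same, ← mul_assoc] at C1
  have C2 := sum_mul_commutator (fun i : Fin n => amp i (A₂ * A₁)) (fun i => amp i A₃)
    (fun i j hij => amp_comm hij (A₂ * A₁) A₃)
  simp only [amp_mul_same, ← mul_assoc] at C2
  have C3 := sum_mul_commutator (fun i : Fin n => amp i (A₁ * A₃)) (fun i => amp i A₂)
    (fun i j hij => amp_comm hij (A₁ * A₃) A₂)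
  simp only [amp_mul_same, ← mul_assoc] at C3
  have C4 := sum_mul_commutator (fun i : Fin n => amp i (A₃ * A₁)) (fun i => amp i A₂)
    (fun i j hij => amp_comm hij (A₃ * A₁) A₂)
  simp only [amp_mul_same, ← mul_assoc] at C4
  have C5 := sum_mul_commutator (fun i : Fin n => amp i (A₂ * A₃)) (fun i => amp i A₁)
    (fun i j hij => amp_comm hij (A₂ * A₃) A₁)
  simp only [amp_mul_same, ← mul_assoc] at C5
  have C6 := sum_mul_commutator (fun i : Fin n => amp i (A₃ * A₂)) (fun i => amp i A₁)
    (fun i j hij => amp_comm hij (A₃ * A₂) A₁)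
  simp only [amp_mul_same, ← mul_assoc] at C6
  -- unfold the definitions in the goal
  simp only [Fluct, Emp, symProd3, jord, amp_smul, amp_add, ← Finset.smul_sum,
    Finset.sum_add_distrib]
  set S1 := ∑ i : Fin n, amp i A₁ with hS1
  set S2 := ∑ i : Fin n, amp i A₂ with hS2
  set S3 := ∑ i : Fin n, amp i A₃ with hS3
  set P12 := ∑ i : Fin n, amp i (A₁ * A₂) with hP12
  set P21 := ∑ i : Fin n, amp i (A₂ * A₁) with hP21
  set P13 := ∑ i : Fin n, amp i (A₁ * A₃) with hP13
  set P31 := ∑ i : Fin n, amp i (A₃ * A₁) with hP31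
  set P23 := ∑ i : Fin n, amp i (A₂ * A₃) with hP23
  set P32 := ∑ i : Fin n, amp i (A₃ * A₂) with hP32
  set T123 := ∑ i : Fin n, amp i (A₁ * A₂ * A₃) with hT123
  set T132 := ∑ i : Fin n, amp i (A₁ * A₃ * A₂) with hT132
  set T213 := ∑ i : Fin n, amp i (A₂ * A₁ * A₃) with hT213
  set T231 := ∑ i : Fin n, amp i (A₂ * A₃ * A₁) with hT231
  set T312 := ∑ i : Fin n, amp i (A₃ * A₁ * A₂) with hT312
  set T321 := ∑ i : Fin n, amp i (A₃ * A₂ * A₁) with hT321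
  set D := ∑ i : Fin n, ∑ j ∈ Finset.univ.erase i, ∑ k ∈ (Finset.univ.erase i).erase j,
    amp i A₁ * amp j A₂ * amp k A₃ with hD
  simp only [← hrdef]
  have h6 : (S1 * S2 * S3 - P12 * S3 - P13 * S2 - S1 * P23 + T123 + T132)
      + (S2 * S1 * S3 - P21 * S3 - P23 * S1 - S2 * P13 + T213 + T231)
      + (S1 * S3 * S2 - P13 * S2 - P12 * S3 - S1 * P32 + T132 + T123)
      + (S3 * S1 * S2 - P31 * S2 - P32 * S1 - S3 * P12 + T312 + T321)
      + (S2 * S3 * S1 - P23 * S1 - P21 * S3 - S2 * P31 + T231 + T213)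
      + (S3 * S2 * S1 - P32 * S1 - P31 * S2 - S3 * P21 + T321 + T312)
      = (6:ℝ) • D := by
    rw [← E1, ← E2, ← E3, ← E4, ← E5, ← E6]
    module
  have h2 : (2:ℝ) • ((S1 * S2 * S3 - P12 * S3 - P13 * S2 - S1 * P23 + T123 + T132)
      + (S2 * S1 * S3 - P21 * S3 - P23 * S1 - S2 * P13 + T213 + T231)
      + (S1 * S3 * S2 - P13 * S2 - P12 * S3 - S1 * P32 + T132 + T123)
      + (S3 * S1 * S2 - P31 * S2 - P32 * S1 - S3 * P12 + T312 + T321)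
      + (S2 * S3 * S1 - P23 * S1 - P21 * S3 - S2 * P31 + T231 + T213)
      + (S3 * S2 * S1 - P32 * S1 - P31 * S2 - S3 * P21 + T321 + T312))
      = (2:ℝ) • (S1*S2*S3) + (2:ℝ) • (S1*S3*S2) + (2:ℝ) • (S2*S1*S3)
        + (2:ℝ) • (S2*S3*S1) + (2:ℝ) • (S3*S1*S2) + (2:ℝ) • (S3*S2*S1)
        - (3:ℝ) • (P12*S3) - (3:ℝ) • (P21*S3) - (3:ℝ) • (S3*P12) - (3:ℝ) • (S3*P21)
        - (3:ℝ) • (P13*S2) - (3:ℝ) • (P31*S2) - (3:ℝ) • (S2*P13) - (3:ℝ) • (S2*P31)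
        - (3:ℝ) • (P23*S1) - (3:ℝ) • (P32*S1) - (3:ℝ) • (S1*P23) - (3:ℝ) • (S1*P32)
        + (4:ℝ) • (T123 + T132 + T213 + T231 + T312 + T321) := by
    rw [C1, C2, C3, C4, C5, C6]
    module
  have hMAIN : D = (12:ℝ)⁻¹ • ((2:ℝ) • (S1*S2*S3) + (2:ℝ) • (S1*S3*S2) + (2:ℝ) • (S2*S1*S3)
        + (2:ℝ) • (S2*S3*S1) + (2:ℝ) • (S3*S1*S2) + (2:ℝ) • (S3*S2*S1)
        - (3:ℝ) • (P12*S3) - (3:ℝ) • (P21*S3) - (3:ℝ) • (S3*P12) - (3:ℝ) • (S3*P21)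
        - (3:ℝ) • (P13*S2) - (3:ℝ) • (P31*S2) - (3:ℝ) • (S2*P13) - (3:ℝ) • (S2*P31)
        - (3:ℝ) • (P23*S1) - (3:ℝ) • (P32*S1) - (3:ℝ) • (S1*P23) - (3:ℝ) • (S1*P32)
        + (4:ℝ) • (T123 + T132 + T213 + T231 + T312 + T321)) := by
    rw [← h2, h6]
    module
  rw [hMAIN]
  simp only [smul_add, smul_sub, smul_smul, smul_mul_assoc, mul_smul_comm,
    add_mul, mul_add]
  clear E1 E2 E3 E4 E5 E6 C1 C2 C3 C4 C5 C6 N12 N13 N312 N231 N321 h6 h2 hMAIN hD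
  have hrne : r ≠ 0 := hr0.ne'
  match_scalars <;>
    (rw [← hrr]; field_simp; try ring)
end

section
/- On the Hilbert space ℂ^d ⊗ ℂ^d define, for X ∈ M(ℂ^d), D(X) := X ⊗ 1 − 1 ⊗ X, and let K be the selfadjoint operator on (ℂ^d ⊗ ℂ^d) ⊗ (ℂ^d ⊗ ℂ^d) given by K := Σ_{i=1}^{d} D(E_{ii}) ⊗ D(E_{ii}) + (1/2) Σ_{1 ≤ j ≠ k ≤ d} D(T_{jk}) ⊗ D(T_{jk}), where for j < k, T_{jk} := i(E_{jk} − E_{kj}) and T_{kj} := E_{jk} + E_{kj}. Then for all density matrices σ_1, σ_2 on ℂ^d: Tr( ((σ_1 ⊗ σ_2) ⊗ (σ_1 ⊗ σ_2)) K ) = ‖σ_1 − σ_2‖₂², the squared Hilbert–Schmidt (Frobenius) norm of σ_1 − σ_2. -/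
/-!
Since `σ₁` and `σ₂` have unit trace, `Tr((σ₁ ⊗ σ₂) D(X)) = Tr((σ₁ - σ₂) X)`, so the expectation of
`K` is `Σ Tr(δ X)²` with `δ = σ₁ - σ₂`, summed over `X = E_ii` and, with weight `1/2`, over the
`T_jk`. Pairing `T_jk` with `T_kj` gives `Tr(δ T_jk)² + Tr(δ T_kj)² = 4 δ_jk δ_kj`, so the sum is
`Σ_jk δ_jk δ_kj = Tr(δ²)`, which equals `Tr(δᴴ δ)` because `δ` is Hermitian.
-/

open scoped BigOperators Kronecker
open Matrix
open scoped ComplexOrder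

/-- For `j < k`, `T_{jk} := i(E_{jk} − E_{kj})`, and `T_{kj} := E_{jk} + E_{kj}`. -/
noncomputable def TMat {d : ℕ} (a b : Fin d) : Matrix (Fin d) (Fin d) ℂ :=
  if a < b then
    Complex.I • (Matrix.single a b 1 - Matrix.single b a 1)
  else
    Matrix.single b a 1 + Matrix.single a b 1

/-- `D(X) := X ⊗ 1 − 1 ⊗ X` on `ℂ^d ⊗ ℂ^d`. -/
noncomputable def DOp {d : ℕ} (X : Matrix (Fin d) (Fin d) ℂ) :
    Matrix (Fin d × Fin d) (Fin d × Fin d) ℂ :=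
  X ⊗ₖ (1 : Matrix (Fin d) (Fin d) ℂ) - (1 : Matrix (Fin d) (Fin d) ℂ) ⊗ₖ X

open Finset

lemma Finset.sum_sum_erase_comm {ι β : Type*} [Fintype ι] [DecidableEq ι] [AddCommMonoid β]
    (g : ι → ι → β) :
    ∑ j, ∑ k ∈ univ.erase j, g j k = ∑ j, ∑ k ∈ univ.erase j, g k j :=
  Finset.sum_comm' fun _ _ => by simp [ne_comm]

lemma Matrix.trace_mul_self_eq_sum_diag_add_sum_offDiag {n R : Type*} [Fintype n] [DecidableEq n]
    [CommSemiring R] (M : Matrix n n R) :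
    (M * M).trace = ∑ j, M j j ^ 2 + ∑ j, ∑ k ∈ univ.erase j, M j k * M k j := by
  simp only [trace, diag, mul_apply, ← sum_add_distrib, sq]
  exact sum_congr rfl fun j _ => (add_sum_erase _ _ (mem_univ j)).symm

section

variable {d : ℕ}

lemma trace_kronecker_mul_DOp (σ₁ σ₂ X : Matrix (Fin d) (Fin d) ℂ)
    (h₁ : σ₁.trace = 1) (h₂ : σ₂.trace = 1) :
    ((σ₁ ⊗ₖ σ₂) * DOp X).trace = ((σ₁ - σ₂) * X).trace := by
  rw [DOp, mul_sub, trace_sub, ← mul_kronecker_mul, ← mul_kronecker_mul, trace_kronecker,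
    trace_kronecker, sub_mul, trace_sub]
  simp only [mul_one, one_mul, h₁, h₂]

lemma trace_kronecker_mul_DOp_kronecker_DOp (σ₁ σ₂ X : Matrix (Fin d) (Fin d) ℂ)
    (h₁ : σ₁.trace = 1) (h₂ : σ₂.trace = 1) :
    (((σ₁ ⊗ₖ σ₂) ⊗ₖ (σ₁ ⊗ₖ σ₂)) * (DOp X ⊗ₖ DOp X)).trace = ((σ₁ - σ₂) * X).trace ^ 2 := by
  rw [← mul_kronecker_mul, trace_kronecker, trace_kronecker_mul_DOp σ₁ σ₂ X h₁ h₂, sq]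

lemma trace_mul_TMat (M : Matrix (Fin d) (Fin d) ℂ) (a b : Fin d) :
    (M * TMat a b).trace =
      if a < b then Complex.I * (M b a - M a b) else M b a + M a b := by
  unfold TMat
  split_ifs
  · simp [mul_sub, trace_mul_single]
  · simp [mul_add, trace_mul_single, add_comm]

lemma trace_mul_TMat_sq_add_sq_swap (M : Matrix (Fin d) (Fin d) ℂ) {j k : Fin d} (hjk : j ≠ k) :
    (M * TMat j k).trace ^ 2 + (M * TMat k j).trace ^ 2 = 4 * (M j k * M k j) := by
  rcases hjk.lt_or_gt with h | h
  · rw [trace_mul_TMat, trace_mul_TMat, if_pos h, if_neg h.asymm]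
    linear_combination (M k j - M j k) ^ 2 * Complex.I_sq
  · rw [trace_mul_TMat, trace_mul_TMat, if_neg h.asymm, if_pos h]
    linear_combination (M j k - M k j) ^ 2 * Complex.I_sq

lemma sum_sum_erase_trace_mul_TMat_sq (M : Matrix (Fin d) (Fin d) ℂ) :
    ∑ j, ∑ k ∈ univ.erase j, (M * TMat j k).trace ^ 2 =
      2 * ∑ j, ∑ k ∈ univ.erase j, M j k * M k j := by
  have h : ∑ j, ∑ k ∈ univ.erase j, ((M * TMat j k).trace ^ 2 + (M * TMat k j).trace ^ 2) =
      4 * ∑ j, ∑ k ∈ univ.erase j, M j k * M k j := by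
    simp only [mul_sum]
    exact sum_congr rfl fun j _ => sum_congr rfl fun k hk =>
      trace_mul_TMat_sq_add_sq_swap M (ne_of_mem_erase hk).symm
  have hswap : ∑ j, ∑ k ∈ univ.erase j, (M * TMat j k).trace ^ 2 =
      ∑ j, ∑ k ∈ univ.erase j, (M * TMat k j).trace ^ 2 :=
    sum_sum_erase_comm _
  simp only [sum_add_distrib] at h
  linear_combination (h + hswap) / 2

end

/-- **An unbiased estimator of the squared Hilbert–Schmidt distance between two states:**
`Tr((σ₁ ⊗ σ₂) ⊗ (σ₁ ⊗ σ₂) K) = ‖σ₁ − σ₂‖₂²` for all density matrices `σ₁, σ₂`. -/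
theorem stmt19 {d : ℕ}
    (K : Matrix ((Fin d × Fin d) × Fin d × Fin d) ((Fin d × Fin d) × Fin d × Fin d) ℂ)
    (hK : K =
      (∑ i : Fin d, DOp (Matrix.single i i 1) ⊗ₖ DOp (Matrix.single i i 1)) +
        (2 : ℂ)⁻¹ • ∑ j : Fin d, ∑ k ∈ Finset.univ.erase j, DOp (TMat j k) ⊗ₖ DOp (TMat j k))
    (σ₁ σ₂ : Matrix (Fin d) (Fin d) ℂ)
    (hσ₁ : σ₁.PosSemidef) (hσ₁tr : σ₁.trace = 1)
    (hσ₂ : σ₂.PosSemidef) (hσ₂tr : σ₂.trace = 1) :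
    (((σ₁ ⊗ₖ σ₂) ⊗ₖ (σ₁ ⊗ₖ σ₂)) * K).trace = ((σ₁ - σ₂)ᴴ * (σ₁ - σ₂)).trace := by
  have hδ : (σ₁ - σ₂)ᴴ = σ₁ - σ₂ := (hσ₁.isHermitian.sub hσ₂.isHermitian).eq
  subst hK
  simp only [Matrix.mul_add, Matrix.mul_smul, Matrix.mul_sum, trace_add, trace_smul, trace_sum,
    smul_eq_mul, trace_kronecker_mul_DOp_kronecker_DOp σ₁ σ₂ _ hσ₁tr hσ₂tr]
  rw [sum_sum_erase_trace_mul_TMat_sq, hδ, trace_mul_self_eq_sum_diag_add_sum_offDiag]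
  simp [trace_mul_single]
end
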